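/- arXiv:2207.04777 — 2 statements merged into one kernel-verified Lean document; each statement's English description precedes it below -/
import Mathlib

section
/- The function ξ(v), defined for v > 1 as the unique nonzero real solution of e^ξ = 1 + vξ, satisfies ξ(v) = log(v log v) + O((log log v)/log v) as v → ∞ (for v ≥ 3). -/
/-- Slope comparison for `exp`: `(e^a - 1)/a < (e^b - 1)/b` for `0 < a < b`. -/
lemma xi_slope_lt {a b : ℝ} (ha : 0 < a) (hab : a < b) :
    b * (Real.exp a - 1) < a * (Real.exp b - 1) := by
  have hb : 0 < b := ha.trans hab
  have hab' : a / b < 1 := (div_lt_one hb).2 hab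
  have h := strictConvexOn_exp.2 (Set.mem_univ (0 : ℝ)) (Set.mem_univ b)
      hb.ne (show (0:ℝ) < 1 - a / b by linarith) (show (0:ℝ) < a / b by positivity)
      (by ring)
  simp only [smul_eq_mul, mul_zero, zero_add, Real.exp_zero, mul_one] at h
  rw [div_mul_cancel₀ _ hb.ne'] at h
  have h2 := (mul_lt_mul_iff_right₀ hb).2 h
  have h3 : b * (1 - a / b + a / b * Real.exp b) = b - a + a * Real.exp b := by
    field_simp
  linarith [h3 ▸ h2]

/-- `log b ≤ log a + (b - a)/a` for positive `a, b`. -/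
lemma xi_log_le {a b : ℝ} (ha : 0 < a) (hb : 0 < b) :
    Real.log b ≤ Real.log a + (b - a) / a := by
  have h := Real.log_le_sub_one_of_pos (div_pos hb ha)
  rw [Real.log_div hb.ne' ha.ne'] at h
  have : b / a - 1 = (b - a) / a := by field_simp
  linarith [this ▸ h]

set_option maxHeartbeats 1000000 in
/-- The function `ξ(v)`, defined for `v > 1` as the unique nonzero real solution of
`e^ξ = 1 + v ξ`, satisfies `ξ(v) = log(v log v) + O((log log v)/log v)` for `v ≥ 3`. -/
theorem xi_asymptotic :
    ∃ C : ℝ, 0 < C ∧ ∀ v : ℝ, 3 ≤ v → ∀ ξ : ℝ, ξ ≠ 0 → Real.exp ξ = 1 + v * ξ →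
      |ξ - Real.log (v * Real.log v)| ≤ C * Real.log (Real.log v) / Real.log v := by
  refine ⟨100, by norm_num, ?_⟩
  intro v hv ξ hne hexp
  have hv0 : (0:ℝ) < v := by linarith
  set L := Real.log v with hLdef
  have he : Real.exp 1 < 2.7182818286 := Real.exp_one_lt_d9
  have he1 : (0:ℝ) < Real.exp 1 := Real.exp_pos 1
  -- L > 1.09
  have hL1 : 1.09 < L := by
    have h1 : Real.log (Real.exp 1 / v) ≤ Real.exp 1 / v - 1 :=
      Real.log_le_sub_one_of_pos (by positivity)
    rw [Real.log_div he1.ne' hv0.ne', Real.log_exp] at h1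
    have h2 : Real.exp 1 / v ≤ Real.exp 1 / 3 := by
      apply div_le_div_of_nonneg_left he1.le (by norm_num) hv
    nlinarith
  have hL0 : (0:ℝ) < L := by linarith
  set LL := Real.log L with hLLdef
  -- LL > 0.08
  have hLL : 0.08 < LL := by
    have h1 : Real.log (1 / L) ≤ 1 / L - 1 := Real.log_le_sub_one_of_pos (by positivity)
    rw [Real.log_div one_ne_zero hL0.ne', Real.log_one] at h1
    have h2 : 1 / L ≤ 1 / 1.09 := by
      apply one_div_le_one_div_of_le (by norm_num) hL1.le
    nlinarith
  -- ξ > 0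
  have hxpos : 0 < ξ := by
    rcases hne.lt_or_gt with h | h
    · exfalso
      have h1 := Real.add_one_le_exp ξ
      nlinarith
    · exact h
  have hexpL : Real.exp L = v := Real.exp_log hv0
  -- L < ξ
  have hLx : L < ξ := by
    by_contra hc
    push_neg at hc
    rcases eq_or_lt_of_le hc with h | h
    · rw [h, hexpL] at hexp
      nlinarith
    · have h2 := xi_slope_lt hxpos h
      rw [hexpL, hexp] at h2
      nlinarith [mul_pos (mul_pos hxpos hv0) (show (0:ℝ) < L - 1 by linarith)]
  have hLv : L ≤ v - 1 := by
    have := Real.log_le_sub_one_of_pos hv0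
    linarith
  have hexp3L : Real.exp (3 * L) = v ^ 3 := by
    rw [show (3:ℝ) * L = L + (L + L) by ring, Real.exp_add, Real.exp_add, hexpL]; ring
  have hcube : 1 + 3 * v * L < v ^ 3 := by
    nlinarith [pow_pos (show (0:ℝ) < v - 1 by linarith) 3,
      mul_le_mul_of_nonneg_left hLv hv0.le]
  -- ξ < 3L
  have hx3L : ξ < 3 * L := by
    by_contra hc
    push_neg at hc
    rcases eq_or_lt_of_le hc with h | h
    · have hx : ξ = 3 * L := h.symm
      rw [hx] at hexp
      rw [hexp] at hexp3L
      nlinarith [hexp3L, hcube]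
    · have h2 := xi_slope_lt (by positivity : (0:ℝ) < 3 * L) h
      rw [hexp3L, hexp] at h2
      nlinarith [mul_lt_mul_of_pos_left hcube hxpos]
  have hxlog : ξ = Real.log (1 + v * ξ) := by
    rw [← hexp, Real.log_exp]
  have hvL1 : 1 ≤ v * L := by nlinarith
  -- lower bound: L + LL < ξ
  have hlow : L + LL < ξ := by
    have h1 : v * L < 1 + v * ξ := by nlinarith
    have h2 : Real.log (v * L) < Real.log (1 + v * ξ) :=
      Real.log_lt_log (by positivity) h1
    rw [Real.log_mul hv0.ne' hL0.ne'] at h2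
    rw [hxlog]
    exact h2
  -- first upper bound: ξ ≤ L + LL + 3
  have hup1 : ξ ≤ L + LL + 3 := by
    have h1 : 1 + v * ξ ≤ 4 * (v * L) := by nlinarith
    have h2 : Real.log (1 + v * ξ) ≤ Real.log (4 * (v * L)) :=
      Real.log_le_log (by positivity) h1
    rw [Real.log_mul (by norm_num) (by positivity), Real.log_mul hv0.ne' hL0.ne'] at h2
    have h4 : Real.log 4 ≤ 3 := by
      have := Real.log_le_sub_one_of_pos (by norm_num : (0:ℝ) < 4); linarith
    rw [hxlog]; linarith
  -- second iteration upper bound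
  have hB0 : (0:ℝ) < L + LL + 3 := by linarith
  have hvB0 : (0:ℝ) < v * (L + LL + 3) := by positivity
  have hup2 : ξ ≤ L + LL + (LL + 3) / L + 1 / (3 * L) := by
    have h1 : 1 + v * ξ ≤ 1 + v * (L + LL + 3) := by nlinarith
    have h2 : Real.log (1 + v * ξ) ≤ Real.log (1 + v * (L + LL + 3)) :=
      Real.log_le_log (by positivity) h1
    have h3 : Real.log (1 + v * (L + LL + 3)) ≤
        Real.log (v * (L + LL + 3)) + 1 / (v * (L + LL + 3)) := by
      have := xi_log_le hvB0 (by linarith : (0:ℝ) < 1 + v * (L + LL + 3))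
      have heq : (1 + v * (L + LL + 3) - v * (L + LL + 3)) / (v * (L + LL + 3)) =
          1 / (v * (L + LL + 3)) := by ring_nf
      linarith [heq ▸ this]
    have h4 : Real.log (v * (L + LL + 3)) = L + Real.log (L + LL + 3) := by
      rw [Real.log_mul hv0.ne' hB0.ne']
    have h5 : Real.log (L + LL + 3) ≤ LL + (LL + 3) / L := by
      have := xi_log_le hL0 hB0
      have heq : (L + LL + 3 - L) / L = (LL + 3) / L := by ring_nf
      linarith [heq ▸ this]
    have h6 : 1 / (v * (L + LL + 3)) ≤ 1 / (3 * L) := by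
      apply one_div_le_one_div_of_le (by positivity)
      nlinarith
    rw [hxlog]
    linarith
  -- conclusion
  rw [Real.log_mul hv0.ne' hL0.ne', ← hLdef, ← hLLdef,
    abs_of_pos (by linarith : (0:ℝ) < ξ - (L + LL))]
  rw [le_div_iff₀ hL0]
  have hmul : ((LL + 3) / L + 1 / (3 * L)) * L = LL + 3 + 1 / 3 := by
    field_simp
  nlinarith [hup2, hmul, hlow]
end

section
/- For σ > 0, T ≥ 1, ϑ ∈ (0,1), and v ∈ ℝ, the vertical partial integral satisfies ∫_T^∞ e^{iτv} |σ+iτ|^{−ϑ} e^{−iϑ arg(σ+iτ)} dτ ≪ |v|^{ϑ−1}/(1+|v|T)^ϑ for v ≠ 0; more precisely, the tail ∫_{τ≥T} e^{sv} s^{−ϑ} dτ with s = σ+iτ is ≪ |v|^{ϑ−1} e^{σv} (1+|v|T)^{−ϑ}. -/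
open MeasureTheory Complex Filter Set intervalIntegral

lemma s_mem_slit (σ τ : ℝ) (hσ : 0 < σ) : ((σ:ℂ) + τ * Complex.I) ∈ Complex.slitPlane := by
  rw [Complex.mem_slitPlane_iff]; left; simp [hσ]

lemma s_ne_zero (σ τ : ℝ) (hσ : 0 < σ) : ((σ:ℂ) + τ * Complex.I) ≠ 0 :=
  Complex.slitPlane_ne_zero (s_mem_slit σ τ hσ)

lemma norm_s_cpow_le (σ τ : ℝ) (hσ : 0 < σ) (hτ : 0 < τ) {a : ℝ} (ha : a ≤ 0) :
    ‖((σ:ℂ) + τ * Complex.I) ^ (a:ℂ)‖ ≤ τ ^ a := by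
  have hz := s_ne_zero σ τ hσ
  rw [Complex.norm_cpow_of_ne_zero hz]
  simp only [Complex.ofReal_re, Complex.ofReal_im, mul_zero, Real.exp_zero, div_one]
  apply Real.rpow_le_rpow_of_nonpos hτ ?_ ha
  calc τ = |((σ:ℂ) + τ * Complex.I).im| := by simp [abs_of_pos hτ]
  _ ≤ ‖((σ:ℂ) + τ * Complex.I)‖ := Complex.abs_im_le_norm _

lemma norm_s_exp (σ τ v : ℝ) :
    ‖Complex.exp (((σ:ℂ) + τ * Complex.I) * v)‖ = Real.exp (σ * v) := by
  rw [Complex.norm_exp]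
  norm_num [Complex.mul_re]

lemma hasDerivAt_s (σ : ℝ) (τ : ℝ) :
    HasDerivAt (fun t : ℝ => (σ:ℂ) + t * Complex.I) Complex.I τ := by
  simpa using (((hasDerivAt_id τ).ofReal_comp).mul_const Complex.I).const_add (σ:ℂ)

lemma tail_ibp (ϑ : ℝ) (hϑ0 : 0 < ϑ) (σ T v : ℝ) (hσ : 0 < σ) (hT : 0 < T) (hv : v ≠ 0) :
    ∃ L : ℂ,
      Filter.Tendsto (fun U : ℝ =>
          ∫ τ in T..U, Complex.exp ((σ + τ * Complex.I) * v) *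
            (σ + τ * Complex.I) ^ (-(ϑ : ℂ)))
        Filter.atTop (nhds L) ∧
      ‖L‖ ≤ 2 * Real.exp (σ * v) * T ^ (-ϑ) / |v| := by
  have hIv : Complex.I * (v:ℂ) ≠ 0 := by
    simp [Complex.I_ne_zero, Complex.ofReal_ne_zero.mpr hv]
  have hvpos : 0 < |v| := abs_pos.mpr hv
  set e : ℝ := Real.exp (σ * v) with he
  have hepos : 0 < e := Real.exp_pos _
  set F : ℝ → ℂ := fun τ => Complex.exp (((σ:ℂ) + τ * Complex.I) * v) / (Complex.I * v) with hF
  set G : ℝ → ℂ := fun τ => ((σ:ℂ) + τ * Complex.I) ^ (-(ϑ:ℂ)) with hG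
  set G' : ℝ → ℂ := fun τ => (-(ϑ:ℂ)) * ((σ:ℂ) + τ * Complex.I) ^ (-(ϑ:ℂ) - 1) * Complex.I
    with hG'
  set Fd : ℝ → ℂ := fun τ => Complex.exp (((σ:ℂ) + τ * Complex.I) * v) with hFd
  have hFderiv : ∀ τ : ℝ, HasDerivAt F (Fd τ) τ := by
    intro τ
    have h1 : HasDerivAt (fun t : ℝ => ((σ:ℂ) + t * Complex.I) * v) (Complex.I * v) τ :=
      (hasDerivAt_s σ τ).mul_const _
    have h2 := (h1.cexp).div_const (Complex.I * v)
    simpa [hF, hFd, mul_div_assoc, div_self hIv] using h2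
  have hGderiv : ∀ τ : ℝ, HasDerivAt G (G' τ) τ := by
    intro τ
    have hcp : HasDerivAt (fun z : ℂ => z ^ (-(ϑ:ℂ)))
        ((-(ϑ:ℂ)) * ((σ:ℂ) + τ * Complex.I) ^ (-(ϑ:ℂ) - 1)) ((σ:ℂ) + τ * Complex.I) :=
      (Complex.hasStrictDerivAt_cpow_const (s_mem_slit σ τ hσ)).hasDerivAt
    have h2 := hcp.scomp (x := τ) (hasDerivAt_s σ τ)
    have h3 : G' τ = Complex.I • ((-(ϑ:ℂ)) * ((σ:ℂ) + τ * Complex.I) ^ (-(ϑ:ℂ) - 1)) := by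
      rw [hG']; rw [smul_eq_mul]; ring
    rw [h3]
    exact h2
  have contS : Continuous fun τ : ℝ => (σ:ℂ) + τ * Complex.I := by continuity
  have contG : Continuous G :=
    contS.cpow continuous_const (fun τ => s_mem_slit σ τ hσ)
  have contG' : Continuous G' :=
    ((continuous_const.mul (contS.cpow continuous_const (fun τ => s_mem_slit σ τ hσ))).mul
      continuous_const)
  have contFd : Continuous Fd := (contS.mul continuous_const).cexp
  have contF : Continuous F := contFd.div_const _
  -- integration by parts identity
  have key : ∀ U : ℝ,
      (∫ τ in T..U, Fd τ * G τ) = G U * F U - G T * F T - ∫ τ in T..U, G' τ * F τ := by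
    intro U
    have := intervalIntegral.integral_mul_deriv_eq_deriv_mul
      (a := T) (b := U) (u := G) (v := F) (u' := G') (v' := Fd)
      (fun x _ => hGderiv x) (fun x _ => hFderiv x)
      (contG'.intervalIntegrable _ _) (contFd.intervalIntegrable _ _)
    rw [← this]
    exact intervalIntegral.integral_congr (fun x _ => mul_comm _ _)
  -- integrability of the boundary H on Ioi T
  set H : ℝ → ℂ := fun τ => G' τ * F τ with hH
  have hnormH : ∀ τ : ℝ, T ≤ τ → ‖H τ‖ ≤ ϑ * (e / |v|) * τ ^ (-ϑ - 1) := by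
    intro τ hτ
    have hτ0 : 0 < τ := lt_of_lt_of_le hT hτ
    have h1 : ‖G' τ‖ ≤ ϑ * τ ^ (-ϑ - 1) := by
      rw [hG']
      simp only [norm_mul, Complex.norm_I, mul_one, norm_neg, Complex.norm_real]
      have : ‖((σ:ℂ) + τ * Complex.I) ^ (-(ϑ:ℂ) - 1)‖ ≤ τ ^ (-ϑ - 1) := by
        have := norm_s_cpow_le σ τ hσ hτ0 (a := -ϑ - 1) (by linarith)
        rw [show ((-ϑ - 1 : ℝ) : ℂ) = -(ϑ:ℂ) - 1 by push_cast; ring] at this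
        exact this
      rw [Real.norm_eq_abs, abs_of_pos hϑ0]
      exact mul_le_mul_of_nonneg_left this hϑ0.le
    have h2 : ‖F τ‖ = e / |v| := by
      rw [hF]
      simp only [norm_div, norm_mul, Complex.norm_I, one_mul, Complex.norm_real,
        Real.norm_eq_abs]
      rw [norm_s_exp σ τ v, he]
    calc ‖H τ‖ = ‖G' τ‖ * ‖F τ‖ := norm_mul _ _
      _ ≤ (ϑ * τ ^ (-ϑ - 1)) * (e / |v|) := by
          rw [h2]; exact mul_le_mul_of_nonneg_right h1 (by positivity)
      _ = ϑ * (e / |v|) * τ ^ (-ϑ - 1) := by ring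
  have hbound_int : IntegrableOn (fun τ : ℝ => ϑ * (e / |v|) * τ ^ (-ϑ - 1)) (Ioi T) :=
    (integrableOn_Ioi_rpow_of_lt (by linarith) hT).const_mul _
  have hH_int : IntegrableOn H (Ioi T) := by
    refine Integrable.mono' hbound_int ((contG'.mul contF).aestronglyMeasurable.restrict) ?_
    filter_upwards [ae_restrict_mem measurableSet_Ioi] with τ hτ
    exact hnormH τ (le_of_lt hτ)
  -- limits
  have T1 : Tendsto (fun U : ℝ => G U * F U) atTop (nhds 0) := by
    apply squeeze_zero_norm' (a := fun U : ℝ => (e / |v|) * U ^ (-ϑ))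
    · filter_upwards [eventually_ge_atTop (max T 1)] with U hU
      have hU0 : 0 < U := lt_of_lt_of_le hT (le_trans (le_max_left _ _) hU)
      rw [norm_mul]
      have h1 : ‖G U‖ ≤ U ^ (-ϑ) := by
        have := norm_s_cpow_le σ U hσ hU0 (a := -ϑ) (by linarith)
        rw [show ((-ϑ : ℝ) : ℂ) = -(ϑ:ℂ) by push_cast; ring] at this
        exact this
      have h2 : ‖F U‖ = e / |v| := by
        rw [hF]
        simp only [norm_div, norm_mul, Complex.norm_I, one_mul, Complex.norm_real,
          Real.norm_eq_abs]
        rw [norm_s_exp σ U v, he]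
      calc ‖G U‖ * ‖F U‖ ≤ U ^ (-ϑ) * (e / |v|) :=
            mul_le_mul h1 (le_of_eq h2) (norm_nonneg _) (by positivity)
        _ = (e / |v|) * U ^ (-ϑ) := by ring
    · have := (tendsto_rpow_neg_atTop hϑ0).const_mul (e / |v|)
      simpa using this
  have T2 : Tendsto (fun U : ℝ => ∫ τ in T..U, H τ) atTop (nhds (∫ τ in Ioi T, H τ)) :=
    intervalIntegral_tendsto_integral_Ioi T hH_int tendsto_id
  refine ⟨0 - G T * F T - ∫ τ in Ioi T, H τ, ?_, ?_⟩
  · have := (T1.sub_const (G T * F T)).sub T2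
    exact this.congr (fun U => (key U).symm)
  · -- norm bound
    have hIoi : ‖∫ τ in Ioi T, H τ‖ ≤ e * T ^ (-ϑ) / |v| := by
      have h1 : ‖∫ τ in Ioi T, H τ‖ ≤ ∫ τ in Ioi T, ϑ * (e / |v|) * τ ^ (-ϑ - 1) := by
        apply MeasureTheory.norm_integral_le_of_norm_le hbound_int
        filter_upwards [ae_restrict_mem measurableSet_Ioi] with τ hτ
        exact hnormH τ (le_of_lt hτ)
      have h2 : ∫ τ in Ioi T, ϑ * (e / |v|) * τ ^ (-ϑ - 1)
          = ϑ * (e / |v|) * (T ^ (-ϑ) / ϑ) := by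
        rw [MeasureTheory.integral_const_mul, integral_Ioi_rpow_of_lt (by linarith) hT]
        rw [show (-ϑ - 1) + 1 = -ϑ by ring]
        field_simp
      rw [h2] at h1
      calc ‖∫ τ in Ioi T, H τ‖ ≤ ϑ * (e / |v|) * (T ^ (-ϑ) / ϑ) := h1
        _ = e * T ^ (-ϑ) / |v| := by field_simp
    have hGT : ‖G T * F T‖ ≤ e * T ^ (-ϑ) / |v| := by
      rw [norm_mul]
      have h1 : ‖G T‖ ≤ T ^ (-ϑ) := by
        have := norm_s_cpow_le σ T hσ hT (a := -ϑ) (by linarith)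
        rw [show ((-ϑ : ℝ) : ℂ) = -(ϑ:ℂ) by push_cast; ring] at this
        exact this
      have h2 : ‖F T‖ = e / |v| := by
        rw [hF]
        simp only [norm_div, norm_mul, Complex.norm_I, one_mul, Complex.norm_real,
          Real.norm_eq_abs]
        rw [norm_s_exp σ T v, he]
      calc ‖G T‖ * ‖F T‖ ≤ T ^ (-ϑ) * (e / |v|) :=
            mul_le_mul h1 (le_of_eq h2) (norm_nonneg _) (by positivity)
        _ = e * T ^ (-ϑ) / |v| := by ring
    calc ‖0 - G T * F T - ∫ τ in Ioi T, H τ‖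
        ≤ ‖0 - G T * F T‖ + ‖∫ τ in Ioi T, H τ‖ := norm_sub_le _ _
      _ ≤ e * T ^ (-ϑ) / |v| + e * T ^ (-ϑ) / |v| := by
          rw [zero_sub, norm_neg]; exact add_le_add hGT hIoi
      _ = 2 * e * T ^ (-ϑ) / |v| := by ring

lemma cont_integrand (ϑ σ v : ℝ) (hσ : 0 < σ) :
    Continuous (fun τ : ℝ => Complex.exp (((σ:ℂ) + τ * Complex.I) * v) *
      ((σ:ℂ) + τ * Complex.I) ^ (-(ϑ:ℂ))) := by
  have contS : Continuous fun τ : ℝ => (σ:ℂ) + τ * Complex.I := by continuity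
  exact ((contS.mul continuous_const).cexp).mul
    (contS.cpow continuous_const (fun τ => s_mem_slit σ τ hσ))

/-- Tail bound: for `σ > 0`, `T ≥ 1`, `ϑ ∈ (0,1)`, `v ≠ 0`, the improper integral
`∫_{τ ≥ T} e^{sv} s^{−ϑ} dτ` (with `s = σ + iτ`) converges and is
`≪ |v|^{ϑ−1} e^{σv} (1+|v|T)^{−ϑ}`, the implied constant depending only on `ϑ`. -/
theorem vertical_tail_bound (ϑ : ℝ) (hϑ : ϑ ∈ Set.Ioo (0:ℝ) 1) :
    ∃ C : ℝ, 0 < C ∧ ∀ σ T v : ℝ, 0 < σ → 1 ≤ T → v ≠ 0 →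
      ∃ L : ℂ,
        Filter.Tendsto (fun U : ℝ =>
            ∫ τ in T..U, Complex.exp ((σ + τ * Complex.I) * v) *
              (σ + τ * Complex.I) ^ (-(ϑ : ℂ)))
          Filter.atTop (nhds L) ∧
        ‖L‖ ≤ C * |v| ^ (ϑ - 1) * Real.exp (σ * v) * (1 + |v| * T) ^ (-ϑ) := by
  obtain ⟨hϑ0, hϑ1⟩ := hϑ
  have h1ϑ : 0 < 1 - ϑ := by linarith
  refine ⟨4 + 2 / (1 - ϑ), by positivity, ?_⟩
  intro σ T v hσ hT hv
  have hT0 : 0 < T := lt_of_lt_of_le one_pos hT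
  have hvpos : 0 < |v| := abs_pos.mpr hv
  set e : ℝ := Real.exp (σ * v) with he
  have hepos : 0 < e := Real.exp_pos _
  have hTpow : 0 < T ^ (-ϑ) := Real.rpow_pos_of_pos hT0 _
  have hvvm : |v| ^ (ϑ - 1) * |v| ^ (-ϑ) = |v|⁻¹ := by
    rw [← Real.rpow_add hvpos, show ϑ - 1 + -ϑ = -1 by ring, Real.rpow_neg_one]
  have hvv : ∀ a : ℝ, |v| ^ a * |v|⁻¹ = |v| ^ (a - 1) := by
    intro a
    rw [← Real.rpow_neg_one |v|, ← Real.rpow_add hvpos, show a + -1 = a - 1 by ring]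
  have hC : (1/2 : ℝ) ≤ 2 ^ (-ϑ) := by
    have := Real.rpow_le_rpow_of_exponent_le (x := 2) (by norm_num)
      (by linarith : (-1:ℝ) ≤ -ϑ)
    rwa [Real.rpow_neg_one, show ((2:ℝ)⁻¹ = 1/2) by norm_num] at this
  rcases le_or_gt 1 (|v| * T) with h1 | h1
  · obtain ⟨L, hL, hLb⟩ := tail_ibp ϑ hϑ0 σ T v hσ hT0 hv
    refine ⟨L, hL, hLb.trans ?_⟩
    have hA : (2 * (|v| * T)) ^ (-ϑ) ≤ (1 + |v| * T) ^ (-ϑ) :=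
      Real.rpow_le_rpow_of_nonpos (by positivity) (by linarith) (by linarith)
    have hB : (2 * (|v| * T)) ^ (-ϑ) = 2 ^ (-ϑ) * (|v| ^ (-ϑ) * T ^ (-ϑ)) := by
      rw [Real.mul_rpow (by norm_num) (by positivity), Real.mul_rpow (by positivity) hT0.le]
    calc 2 * e * T ^ (-ϑ) / |v|
        = 4 * (|v| ^ (ϑ - 1) * e * ((1/2) * (|v| ^ (-ϑ) * T ^ (-ϑ)))) := by
          rw [div_eq_mul_inv, ← hvvm]; ring
      _ ≤ (4 + 2 / (1 - ϑ)) * (|v| ^ (ϑ - 1) * e * ((1/2) * (|v| ^ (-ϑ) * T ^ (-ϑ)))) := by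
          apply mul_le_mul_of_nonneg_right _ (by positivity)
          have : (0:ℝ) ≤ 2 / (1 - ϑ) := by positivity
          linarith
      _ ≤ (4 + 2 / (1 - ϑ)) * (|v| ^ (ϑ - 1) * e * (2 ^ (-ϑ) * (|v| ^ (-ϑ) * T ^ (-ϑ)))) := by
          apply mul_le_mul_of_nonneg_left _ (by positivity)
          apply mul_le_mul_of_nonneg_left _ (by positivity)
          exact mul_le_mul_of_nonneg_right hC (by positivity)
      _ = (4 + 2 / (1 - ϑ)) * (|v| ^ (ϑ - 1) * e * (2 * (|v| * T)) ^ (-ϑ)) := by rw [hB]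
      _ ≤ (4 + 2 / (1 - ϑ)) * (|v| ^ (ϑ - 1) * e * (1 + |v| * T) ^ (-ϑ)) := by
          apply mul_le_mul_of_nonneg_left _ (by positivity)
          exact mul_le_mul_of_nonneg_left hA (by positivity)
      _ = (4 + 2 / (1 - ϑ)) * |v| ^ (ϑ - 1) * e * (1 + |v| * T) ^ (-ϑ) := by ring
  · -- |v| * T < 1
    have hM : (0:ℝ) < |v|⁻¹ := by positivity
    have hTM : T ≤ |v|⁻¹ := by
      rw [← one_div, le_div_iff₀ hvpos]
      nlinarith [abs_nonneg v]
    obtain ⟨L2, hL2, hL2b⟩ := tail_ibp ϑ hϑ0 σ (|v|⁻¹) v hσ hM hv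
    have contf := cont_integrand ϑ σ v hσ
    set f : ℝ → ℂ := fun τ => Complex.exp (((σ:ℂ) + τ * Complex.I) * v) *
      ((σ:ℂ) + τ * Complex.I) ^ (-(ϑ:ℂ)) with hf
    set J : ℂ := ∫ τ in T..(|v|⁻¹), f τ with hJ
    refine ⟨J + L2, ?_, ?_⟩
    · apply (Filter.Tendsto.const_add J hL2).congr'
      filter_upwards [eventually_ge_atTop (|v|⁻¹)] with U hU
      exact intervalIntegral.integral_add_adjacent_intervals
        (contf.intervalIntegrable T _) (contf.intervalIntegrable _ U)
    · -- rpow facts about M = |v|⁻¹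
      have hM1 : (|v|⁻¹) ^ (1 - ϑ) = |v| ^ (ϑ - 1) := by
        rw [Real.inv_rpow (abs_nonneg v), ← Real.rpow_neg (abs_nonneg v),
          show -(1 - ϑ) = ϑ - 1 by ring]
      have hM2 : (|v|⁻¹) ^ (-ϑ) = |v| ^ ϑ := by
        rw [Real.inv_rpow (abs_nonneg v), ← Real.rpow_neg (abs_nonneg v), neg_neg]
      -- bound on J
      have hJb : ‖J‖ ≤ e * |v| ^ (ϑ - 1) / (1 - ϑ) := by
        have hint_g : IntervalIntegrable (fun t : ℝ => e * t ^ (-ϑ)) MeasureTheory.volume T (|v|⁻¹) := by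
          apply ContinuousOn.intervalIntegrable
          apply continuousOn_const.mul
          intro x hx
          rw [Set.uIcc_of_le hTM] at hx
          exact (Real.continuousAt_rpow_const x (-ϑ)
            (Or.inl (lt_of_lt_of_le hT0 hx.1).ne')).continuousWithinAt
        have hae : ∀ᵐ t ∂(MeasureTheory.volume.restrict (Set.uIoc T (|v|⁻¹))),
            ‖f t‖ ≤ e * t ^ (-ϑ) := by
          filter_upwards [MeasureTheory.ae_restrict_mem measurableSet_uIoc] with t ht
          rw [Set.uIoc_of_le hTM] at ht
          have ht0 : 0 < t := lt_trans hT0 ht.1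
          rw [hf, norm_mul, norm_s_exp]
          have := norm_s_cpow_le σ t hσ ht0 (a := -ϑ) (by linarith)
          rw [show ((-ϑ : ℝ) : ℂ) = -(ϑ:ℂ) by push_cast; ring] at this
          exact mul_le_mul_of_nonneg_left this hepos.le
        have h1' := intervalIntegral.norm_integral_le_abs_of_norm_le hae hint_g
        have h2' : (∫ t in T..(|v|⁻¹), e * t ^ (-ϑ))
            = e * (((|v|⁻¹) ^ (1 - ϑ) - T ^ (1 - ϑ)) / (1 - ϑ)) := by
          rw [intervalIntegral.integral_const_mul, integral_rpow (Or.inl (by linarith)),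
            show -ϑ + 1 = 1 - ϑ by ring]
        have h3' : (0:ℝ) ≤ T ^ (1 - ϑ) := Real.rpow_nonneg hT0.le _
        have h4' : T ^ (1 - ϑ) ≤ (|v|⁻¹) ^ (1 - ϑ) :=
          Real.rpow_le_rpow hT0.le hTM (by linarith)
        rw [h2'] at h1'
        calc ‖J‖ ≤ |e * (((|v|⁻¹) ^ (1 - ϑ) - T ^ (1 - ϑ)) / (1 - ϑ))| := h1'
          _ = e * (((|v|⁻¹) ^ (1 - ϑ) - T ^ (1 - ϑ)) / (1 - ϑ)) := by
              apply _root_.abs_of_nonneg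
              apply mul_nonneg hepos.le
              apply div_nonneg (by linarith) h1ϑ.le
          _ ≤ e * ((|v|⁻¹) ^ (1 - ϑ) / (1 - ϑ)) := by
              apply mul_le_mul_of_nonneg_left _ hepos.le
              apply (div_le_div_iff_of_pos_right h1ϑ).mpr
              linarith
          _ = e * |v| ^ (ϑ - 1) / (1 - ϑ) := by rw [hM1]; ring
      have hL2b' : ‖L2‖ ≤ 2 * e * |v| ^ (ϑ - 1) := by
        calc ‖L2‖ ≤ 2 * e * (|v|⁻¹) ^ (-ϑ) / |v| := hL2b
          _ = 2 * e * (|v| ^ ϑ * |v|⁻¹) := by rw [hM2]; ring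
          _ = 2 * e * |v| ^ (ϑ - 1) := by rw [hvv]
      have hD : (1/2 : ℝ) ≤ (1 + |v| * T) ^ (-ϑ) := by
        refine le_trans hC (Real.rpow_le_rpow_of_nonpos (by positivity) ?_ (by linarith))
        linarith
      calc ‖J + L2‖ ≤ ‖J‖ + ‖L2‖ := norm_add_le _ _
        _ ≤ e * |v| ^ (ϑ - 1) / (1 - ϑ) + 2 * e * |v| ^ (ϑ - 1) := add_le_add hJb hL2b'
        _ = (4 + 2 / (1 - ϑ)) * (|v| ^ (ϑ - 1) * e * (1/2)) := by
            field_simp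
            ring
        _ ≤ (4 + 2 / (1 - ϑ)) * (|v| ^ (ϑ - 1) * e * (1 + |v| * T) ^ (-ϑ)) := by
            apply mul_le_mul_of_nonneg_left _ (by positivity)
            exact mul_le_mul_of_nonneg_left hD (by positivity)
        _ = (4 + 2 / (1 - ϑ)) * |v| ^ (ϑ - 1) * e * (1 + |v| * T) ^ (-ϑ) := by ring
end
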